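/- Let M be a loopless matroid on a finite set E with |E| = m, rank function r, and rank r = r(M), satisfying r·|A| ≤ m·r(A) for all A ⊆ E (so in particular r·m ≤ m·r(E), i.e., equality |E|·r = m·r(E) holds for A = E). Suppose φ : E → ZMod m is a map such that for every x ∈ ZMod m, the set {e ∈ E | x ∈ {φ(e), …, φ(e)+r−1}} is independent. If gcd(r, m) = 1, then φ is a bijection from E to ZMod m. -/

import Mathlib

/-!
Let `N y` be the number of `e` with `φ e = y`. The `e` whose interval `cycInt r (φ e)` contains
`x` form an independent set of size `∑_{k<r} N (x - k)`, so each such window sum is at most `r`,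
while together the `m` window sums count every element `r` times. Hence every window sum equals
`r`, and comparing the windows at `x` and `x + 1` shows that `N` is `r`-periodic. As `r` is a
unit of `ZMod m`, `N` is constant, and since it sums to `m`, `N ≡ 1`.
-/

open Set

/-- The rank of a set `A` in a matroid `M`: the largest size of an independent subset of `A`. -/
noncomputable def mRank {α : Type*} (M : Matroid α) (A : Set α) : ℕ :=
  sSup {n : ℕ | ∃ I ⊆ A, M.Indep I ∧ I.ncard = n}

/-- The cyclic interval of `w` consecutive residues starting at `s` in `ZMod D`. -/
def cycInt {D : ℕ} (w : ℕ) (s : ZMod D) : Set (ZMod D) :=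
  {x | ∃ k : ℕ, k < w ∧ x = s + (k : ZMod D)}

section mRank

variable {α : Type*} (M : Matroid α) {A : Set α}

lemma bddAbove_mRank_set (hA : A.Finite) :
    BddAbove {n : ℕ | ∃ I ⊆ A, M.Indep I ∧ I.ncard = n} := by
  refine ⟨A.ncard, ?_⟩
  rintro n ⟨I, hIA, -, rfl⟩
  exact ncard_le_ncard hIA hA

lemma mRank_le_ncard (hA : A.Finite) : mRank M A ≤ A.ncard :=
  csSup_le ⟨0, ∅, empty_subset A, M.empty_indep, ncard_empty α⟩ fun _ ⟨_, hIA, _, hI⟩ =>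
    hI ▸ ncard_le_ncard hIA hA

lemma Matroid.Indep.ncard_le_mRank {M : Matroid α} {I : Set α} (hI : M.Indep I) (hIA : I ⊆ A)
    (hA : A.Finite) : I.ncard ≤ mRank M A :=
  le_csSup (bddAbove_mRank_set M hA) ⟨I, hIA, hI, rfl⟩

end mRank

section windows

variable {R : Type*} [CommRing R] {r : ℕ} {f : R → ℕ}

lemma periodic_of_sum_range_sub_eq {c : ℕ} (hf : ∀ x, ∑ k ∈ Finset.range r, f (x - k) = c) :
    Function.Periodic f r := by
  intro y
  obtain _ | s := r
  · simp
  have hnext := hf (y + s + 1)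
  have hcur := hf (y + s)
  rw [Finset.sum_range_succ'] at hnext
  rw [Finset.sum_range_succ] at hcur
  have hshift : ∀ k ∈ Finset.range s, f (y + s + 1 - ((k + 1 : ℕ) : R)) = f (y + s - k) := by
    intro k _
    congr 1
    push_cast
    ring
  rw [Finset.sum_congr rfl hshift] at hnext
  have hlast : f (y + s + 1 - ((0 : ℕ) : R)) = f (y + s - s) := by omega
  convert hlast using 2 <;> push_cast <;> ring

lemma sum_range_sub_eq_of_le [Fintype R] (hle : ∀ x, ∑ k ∈ Finset.range r, f (x - k) ≤ r)
    (hsum : ∑ x, f x = Fintype.card R) (x : R) : ∑ k ∈ Finset.range r, f (x - k) = r := by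
  have htotal : ∑ x, ∑ k ∈ Finset.range r, f (x - k) = ∑ _x : R, r := by
    rw [Finset.sum_comm]
    have hshift (k : ℕ) : ∑ x, f (x - k) = ∑ x, f x :=
      Fintype.sum_equiv (Equiv.subRight (k : R)) _ f fun _ => rfl
    simp only [hshift, hsum, Finset.sum_const, Finset.card_range, Finset.card_univ, smul_eq_mul,
      mul_comm]
  exact (Finset.sum_eq_sum_iff_of_le fun x _ => hle x).1 htotal x (Finset.mem_univ x)

end windows

lemma Function.Periodic.eq_apply_zero_of_coprime {β : Type*} {m r : ℕ} [NeZero m]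
    {f : ZMod m → β} (hf : Function.Periodic f r) (hr : r.Coprime m) (x : ZMod m) :
    f x = f 0 := by
  obtain ⟨n, rfl⟩ : ∃ n : ℕ, (n : ZMod m) * r = x := by
    refine ⟨(x * (r : ZMod m)⁻¹).val, ?_⟩
    rw [ZMod.natCast_zmod_val, mul_assoc, mul_comm _ (r : ZMod m), ZMod.coe_mul_inv_eq_one r hr,
      mul_one]
  simpa using hf.nat_mul n 0

open Classical in
lemma card_filter_mem_cycInt {α : Type*} [Fintype α] {m r : ℕ} (hrm : r ≤ m)
    (φ : α → ZMod m) (x : ZMod m) :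
    (Finset.univ.filter fun e => x ∈ cycInt r (φ e)).card =
      ∑ k ∈ Finset.range r, (Finset.univ.filter fun e => φ e = x - k).card := by
  have hunion : (Finset.univ.filter fun e => x ∈ cycInt r (φ e)) =
      (Finset.range r).biUnion fun k => Finset.univ.filter fun e => φ e = x - k := by
    ext e
    rw [Finset.mem_filter]
    simp only [Finset.mem_univ, true_and, Finset.mem_biUnion, Finset.mem_filter, Finset.mem_range,
      cycInt, mem_ofPred_eq, eq_sub_iff_add_eq, eq_comm]
  rw [hunion, Finset.card_biUnion]
  intro k hk k' hk' hne
  refine Finset.disjoint_left.2 fun e he he' => hne ?_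
  simp only [Finset.mem_filter, Finset.mem_univ, true_and] at he he'
  have hkk' : (k : ZMod m) = k' := sub_right_injective (he.symm.trans he')
  exact ((ZMod.natCast_eq_natCast_iff _ _ _).1 hkk').eq_of_lt_of_lt
    ((Finset.mem_range.1 hk).trans_le hrm) ((Finset.mem_range.1 hk').trans_le hrm)

theorem stmt_19_general {α : Type*} [Fintype α] (M : Matroid α) (m r : ℕ)
    (hm : m = Fintype.card α) (hr : r = mRank M Set.univ)
    (φ : α → ZMod m)
    (hφ : ∀ x : ZMod m, M.Indep {e : α | x ∈ cycInt r (φ e)})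
    (hgcd : Nat.gcd r m = 1) :
    Function.Bijective φ := by
  classical
  have hrm : r ≤ m := by
    simpa [hr, hm] using mRank_le_ncard M finite_univ
  have : NeZero m := ⟨fun hm0 => by rw [hm0, Nat.gcd_zero_right] at hgcd; omega⟩
  set N : ZMod m → ℕ := fun y => (Finset.univ.filter fun e => φ e = y).card
  have hsum : ∑ y, N y = Fintype.card (ZMod m) := by
    rw [ZMod.card]
    refine .trans ?_ (Finset.card_univ.trans hm.symm)
    exact (Finset.card_eq_sum_card_fiberwise fun e _ => Finset.mem_univ (φ e)).symm
  have hwindow : ∀ x, ∑ k ∈ Finset.range r, N (x - k) = r := by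
    refine sum_range_sub_eq_of_le (fun x => ?_) hsum
    rw [← card_filter_mem_cycInt hrm, ← ncard_coe_finset, Finset.coe_filter_univ]
    exact ((hφ x).ncard_le_mRank (subset_univ _) finite_univ).trans_eq hr.symm
  have hconst := (periodic_of_sum_range_sub_eq hwindow).eq_apply_zero_of_coprime hgcd
  have hN : ∀ y, N y = 1 := by
    have : m * N 0 = m * 1 := by
      simpa [hconst, ZMod.card] using hsum
    intro y
    rw [hconst, Nat.eq_of_mul_eq_mul_left (NeZero.pos m) this]
  refine (Fintype.bijective_iff_surjective_and_card φ).2 ⟨fun y => ?_, by simp [hm]⟩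
  obtain ⟨e, he⟩ := Finset.card_pos.1 ((hN y).symm ▸ Nat.one_pos)
  exact ⟨e, (Finset.mem_filter.1 he).2⟩

theorem stmt_19 {α : Type*} [Fintype α] (M : Matroid α) (hE : M.E = Set.univ)
    (hloop : ∀ e : α, M.Indep {e}) (m r : ℕ)
    (hm : m = Fintype.card α) (hr : r = mRank M Set.univ)
    (hcond : ∀ A : Finset α, r * A.card ≤ m * mRank M (A : Set α))
    (φ : α → ZMod m)
    (hφ : ∀ x : ZMod m, M.Indep {e : α | x ∈ cycInt r (φ e)})
    (hgcd : Nat.gcd r m = 1) :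
    Function.Bijective φ :=
  stmt_19_general M m r hm hr φ hφ hgcd
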